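/- arXiv:math/0309209 — 10 statements merged into one kernel-verified Lean document; each statement's English description precedes it below -/
import Mathlib

section
/- Let A be a general metric space, N : A → [0,∞] a right module (i.e. N(y) ≤ d(x,y) + N(x) for all x,y), and F a proper filter on A. Then ⨆_{f∈F} ⨅_{y∈f} N(y) ≤ ⨅_{x∈A} (M⁻(F)(x) + N(x)), where M⁻(F)(x) = ⨆_{f∈F} ⨅_{y∈f} d(x,y). Moreover, if F is weakly flat, this inequality is an equality. -/
/-!
The left-hand side is `liminf N F`, `M⁻(F) x` is `liminf (d x) F`, and weak flatness says
`limsup M⁻(F) F = 0`, i.e. `M⁻(F) → 0` along `F`. The inequality is the module axiom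
`N ≤ d x · + N x` passed to the liminf. Conversely, an infimum is at most a liminf, and adding a
function tending to `0` does not change a liminf, so `⨅ x, M⁻(F) x + N x ≤ liminf N F`.
-/

open ENNReal Filter Topology

section

variable {A : Type*} {F : Filter A}

theorem liminf_le_iInf_liminf_add {d : A → A → ℝ≥0∞} {N : A → ℝ≥0∞}
    (hN : ∀ x y, N y ≤ d x y + N x) [F.NeBot] :
    liminf N F ≤ ⨅ x, liminf (d x) F + N x :=
  le_iInf fun x => (liminf_le_liminf (.of_forall (hN x))).trans_eq
    (liminf_add_const F _ _ (by isBoundedDefault) (by isBoundedDefault))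

theorem iInf_add_le_liminf_of_limsup_eq_zero {M N : A → ℝ≥0∞} (hM : limsup M F = 0) :
    ⨅ x, M x + N x ≤ liminf N F := by
  have hM_tendsto : Tendsto M F (𝓝 0) :=
    tendsto_of_le_liminf_of_limsup_le zero_le hM.le
  calc ⨅ x, M x + N x ≤ liminf (M + N) F := iInf_le_liminf
    _ = liminf N F := ENNReal.liminf_add_of_left_tendsto_zero hM_tendsto N

end

theorem colim_right_module_general (A : Type*) (d : A → A → ℝ≥0∞)
    (N : A → ℝ≥0∞) (hN : ∀ x y, N y ≤ d x y + N x)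
    (F : Filter A) [F.NeBot] :
    (⨆ f ∈ F, ⨅ y ∈ f, N y) ≤ (⨅ x, (⨆ f ∈ F, ⨅ y ∈ f, d x y) + N x) ∧
    ((⨅ f ∈ F, ⨆ x ∈ f, ⨆ g ∈ F, ⨅ y ∈ g, d x y) = 0 →
      (⨆ f ∈ F, ⨅ y ∈ f, N y) = (⨅ x, (⨆ f ∈ F, ⨅ y ∈ f, d x y) + N x)) := by
  simp only [← liminf_eq_iSup_iInf, ← limsup_eq_iInf_iSup]
  have hle : liminf N F ≤ ⨅ x, liminf (d x) F + N x := liminf_le_iInf_liminf_add hN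
  exact ⟨hle, fun hflat => hle.antisymm (iInf_add_le_liminf_of_limsup_eq_zero hflat)⟩

theorem colim_right_module (A : Type*) (d : A → A → ℝ≥0∞)
    (htri : ∀ x y z, d x z ≤ d x y + d y z) (hrefl : ∀ x, d x x = 0)
    (N : A → ℝ≥0∞) (hN : ∀ x y, N y ≤ d x y + N x)
    (F : Filter A) [F.NeBot] :
    (⨆ f ∈ F, ⨅ y ∈ f, N y) ≤ (⨅ x, (⨆ f ∈ F, ⨅ y ∈ f, d x y) + N x) ∧
    ((⨅ f ∈ F, ⨆ x ∈ f, ⨆ g ∈ F, ⨅ y ∈ g, d x y) = 0 →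
      (⨆ f ∈ F, ⨅ y ∈ f, N y) = (⨅ x, (⨆ f ∈ F, ⨅ y ∈ f, d x y) + N x)) :=
  colim_right_module_general A d N hN F
end

section
/- Let A be a symmetric general metric space (d(x,y) = d(y,x) for all x,y). Then every flat filter on A is Cauchy. -/
open ENNReal

open Filter

theorem flat_of_symmetric_is_cauchy (A : Type*) (d : A → A → ℝ≥0∞)
    (htri : ∀ x y z, d x z ≤ d x y + d y z) (hrefl : ∀ x, d x x = 0)
    (hsym : ∀ x y, d x y = d y x)
    (F : Filter A) [F.NeBot]
    (hflat : ∀ ε : ℝ≥0∞, 0 < ε → ∃ f ∈ F, ∀ s : Finset A, ↑s ⊆ f →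
      ∀ g ∈ F, ∃ y ∈ g, ∀ x ∈ s, d x y ≤ ε) :
    ∀ ε : ℝ≥0∞, 0 < ε → ∃ f ∈ F, ∀ x ∈ f, ∀ y ∈ f, d x y ≤ ε := by
  intro ε hε
  obtain ⟨f, hfF, hf⟩ := hflat (ε / 2) (ENNReal.half_pos hε.ne')
  refine ⟨f, hfF, fun x hx y hy => ?_⟩
  haveI := Classical.decEq A
  obtain ⟨z, hz, hdz⟩ := hf {x, y} (by simp [Set.insert_subset_iff, hx, hy]) f hfF
  calc d x y ≤ d x z + d z y := htri x z y
    _ = d x z + d y z := by rw [hsym z y]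
    _ ≤ ε / 2 + ε / 2 := add_le_add (hdz x (by simp)) (hdz y (by simp))
    _ = ε := ENNReal.add_halves ε
end

section
/- Let A be a general metric space and F a proper filter on A. Then F is weakly flat if and only if F ⊇ F(M⁻(F)), i.e. for every ε > 0 the set {x ∈ A : M⁻(F)(x) ≤ ε} belongs to F. -/
open ENNReal

open Filter

theorem weaklyflat_iff_closed_sets_mem (A : Type*) (d : A → A → ℝ≥0∞)
    (htri : ∀ x y z, d x z ≤ d x y + d y z) (hrefl : ∀ x, d x x = 0)
    (F : Filter A) [F.NeBot] :
    (⨅ f ∈ F, ⨆ x ∈ f, ⨆ g ∈ F, ⨅ y ∈ g, d x y) = 0 ↔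
      (∀ ε : ℝ≥0∞, 0 < ε → {x | (⨆ f ∈ F, ⨅ y ∈ f, d x y) ≤ ε} ∈ F) := by
  constructor
  · intro h ε hε
    have h' : (⨅ f ∈ F, ⨆ x ∈ f, ⨆ g ∈ F, ⨅ y ∈ g, d x y) < ε := h ▸ hε
    rw [iInf_lt_iff] at h'
    obtain ⟨f, hf⟩ := h'
    rw [iInf_lt_iff] at hf
    obtain ⟨hfF, hf⟩ := hf
    exact F.mem_of_superset hfF fun x hx =>
      le_of_lt (lt_of_le_of_lt (le_iSup₂_of_le x hx le_rfl) hf)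
  · intro h
    refine le_antisymm ?_ zero_le
    refine ENNReal.le_of_forall_pos_le_add fun ε hε _ => ?_
    rw [zero_add]
    calc (⨅ f ∈ F, ⨆ x ∈ f, ⨆ g ∈ F, ⨅ y ∈ g, d x y)
        ≤ ⨆ x ∈ {x | (⨆ f ∈ F, ⨅ y ∈ f, d x y) ≤ (ε : ℝ≥0∞)}, ⨆ g ∈ F, ⨅ y ∈ g, d x y :=
          iInf₂_le _ (h ε (by exact_mod_cast hε))
      _ ≤ ε := iSup₂_le fun x hx => hx
end

section
/- Let A be a general metric space and F a nonempty family of weakly flat filters on A. Then the intersection ⋂ F (infimum of the filters) is a weakly flat filter on A. -/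
open ENNReal

open Filter

theorem inter_weaklyflat (A : Type*) (d : A → A → ℝ≥0∞)
    (htri : ∀ x y z, d x z ≤ d x y + d y z) (hrefl : ∀ x, d x x = 0)
    (S : Set (Filter A)) (hS : S.Nonempty)
    (hproper : ∀ G ∈ S, G.NeBot)
    (hwf : ∀ G ∈ S, ∀ ε : ℝ≥0∞, 0 < ε →
      ∃ g ∈ G, ∀ x ∈ g, ∀ h ∈ G, ∃ y ∈ h, d x y ≤ ε) :
    (sSup S).NeBot ∧
    (∀ ε : ℝ≥0∞, 0 < ε →
      ∃ g ∈ sSup S, ∀ x ∈ g, ∀ h ∈ sSup S, ∃ y ∈ h, d x y ≤ ε) := by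
  obtain ⟨G₀, hG₀⟩ := hS
  constructor
  · exact (hproper G₀ hG₀).mono (le_sSup hG₀)
  · intro ε hε
    choose g hg hgood using fun (G : S) => hwf G G.2 ε hε
    refine ⟨⋃ G : S, g G, ?_, ?_⟩
    · rw [Filter.mem_sSup]
      intro f hf
      exact Filter.mem_of_superset (hg ⟨f, hf⟩) (Set.subset_iUnion (fun G : S => g G) ⟨f, hf⟩)
    · intro x hx h hh
      obtain ⟨G, hxG⟩ := Set.mem_iUnion.mp hx
      exact hgood G x hxG h (Filter.mem_sSup.mp hh G G.2)
end

section
/- Let A be a general metric space, f ⊆ A, ε > 0, and F a flat filter on A such that for every x ∈ f and every g ∈ F there exists y ∈ g with d(x,y) ≤ ε. Then for every α > 0, for every finite family x₁,…,xₙ ∈ f and every g ∈ F there exists z ∈ g with d(xᵢ,z) ≤ ε + α for all i. -/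
open ENNReal

open Filter

theorem P_implies_Q (A : Type*) (d : A → A → ℝ≥0∞)
    (htri : ∀ x y z, d x z ≤ d x y + d y z) (hrefl : ∀ x, d x x = 0)
    (F : Filter A) [F.NeBot]
    (hflat : ∀ δ : ℝ≥0∞, 0 < δ → ∃ h ∈ F, ∀ s : Finset A, ↑s ⊆ h →
      ∀ g ∈ F, ∃ y ∈ g, ∀ x ∈ s, d x y ≤ δ)
    (f : Set A) (ε : ℝ≥0∞) (hε : 0 < ε)
    (hP : ∀ x ∈ f, ∀ g ∈ F, ∃ y ∈ g, d x y ≤ ε) :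
    ∀ α : ℝ≥0∞, 0 < α → ∀ s : Finset A, ↑s ⊆ f →
      ∀ g ∈ F, ∃ z ∈ g, ∀ x ∈ s, d x z ≤ ε + α := by
  intro α hα s hs g hg
  classical
  obtain ⟨h, hh, hflat'⟩ := hflat α hα
  choose y hyh hyd using fun x (hx : x ∈ f) => hP x hx h hh
  set Y : A → A := fun x => if hx : x ∈ f then y x hx else x with hY
  have hYs : ∀ x ∈ s, Y x ∈ h ∧ d x (Y x) ≤ ε := by
    intro x hx
    have hxf : x ∈ f := hs hx
    simp only [hY, dif_pos hxf]
    exact ⟨hyh x hxf, hyd x hxf⟩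
  obtain ⟨z, hz, hdz⟩ := hflat' (s.image Y)
    (by
      intro a ha
      simp only [Finset.coe_image, Set.mem_image, Finset.mem_coe] at ha
      obtain ⟨x, hx, rfl⟩ := ha
      exact (hYs x hx).1) g hg
  refine ⟨z, hz, fun x hx => ?_⟩
  calc d x z ≤ d x (Y x) + d (Y x) z := htri _ _ _
    _ ≤ ε + α := add_le_add (hYs x hx).2 (hdz _ (Finset.mem_image_of_mem Y hx))
end

section
/- Every sequence (x_n) in a general metric space A that is forward Cauchy generates a flat filter: the filter generated by the tails {x_p : p ≥ n} is flat. -/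
open ENNReal

open Filter

theorem forwardCauchy_flat (A : Type*) (d : A → A → ℝ≥0∞)
    (htri : ∀ x y z, d x z ≤ d x y + d y z) (hrefl : ∀ x, d x x = 0)
    (x : ℕ → A)
    (hfc : ∀ ε : ℝ≥0∞, 0 < ε → ∃ N : ℕ, ∀ n m : ℕ, N ≤ n → n ≤ m →
      d (x n) (x m) ≤ ε) :
    ∀ ε : ℝ≥0∞, 0 < ε → ∃ f ∈ Filter.map x Filter.atTop,
      ∀ s : Finset A, ↑s ⊆ f → ∀ g ∈ Filter.map x Filter.atTop,
        ∃ y ∈ g, ∀ z ∈ s, d z y ≤ ε := by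
  intro ε hε
  obtain ⟨N, hN⟩ := hfc ε hε
  refine ⟨{a | ∃ n, N ≤ n ∧ x n = a}, ?_, ?_⟩
  · rw [Filter.mem_map]
    exact Filter.mem_of_superset (Filter.mem_atTop N) (fun n hn => ⟨n, hn, rfl⟩)
  · intro s hs g hg
    rw [Filter.mem_map, Filter.mem_atTop_sets] at hg
    obtain ⟨M, hM⟩ := hg
    -- choose an index for each z ∈ s
    choose idx hidx hidx2 using fun z (hz : z ∈ s) => hs hz
    set K := s.attach.sup (fun z => idx z.1 z.2) with hK
    refine ⟨x (max M K), hM _ (le_max_left _ _), ?_⟩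
    intro z hz
    have h1 : idx z hz ≤ K := Finset.le_sup (f := fun z : {a // a ∈ s} => idx z.1 z.2) (Finset.mem_attach s ⟨z, hz⟩)
    have := hN (idx z hz) (max M K) (hidx z hz) (le_trans h1 (le_max_right _ _))
    rwa [hidx2 z hz] at this
end

section
/- Let F be a proper filter on [0,∞] (viewed as a general metric space with distance d(x,y) = max{y−x,0}, truncated subtraction). If liminf(F) := ⨆_{f∈F} ⨅_{x∈f} x is finite (≠ ∞), then F is weakly flat. -/
open ENNReal

open Filter

/-! With `L` the (finite) liminf of `F`, the points of `F` eventually satisfy `L ≤ x + ε/2`,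
while every set of `F` contains some `y < L + ε/2`; hence `y ≤ x + ε`. -/

namespace ENNReal

variable {α : Type*} {f : Filter α} {u : α → ℝ≥0∞} {δ : ℝ≥0∞}

theorem eventually_liminf_le_add (hu : liminf u f ≠ ∞) (hδ : δ ≠ 0) :
    ∀ᶠ x in f, liminf u f ≤ u x + δ := by
  rcases eq_or_ne (liminf u f) 0 with hzero | hpos
  · simp [hzero]
  · filter_upwards [eventually_lt_of_lt_liminf (ENNReal.sub_lt_self hu hpos hδ)] with x hx
    exact tsub_le_iff_right.mp hx.le

theorem frequently_lt_liminf_add (hu : liminf u f ≠ ∞) (hδ : δ ≠ 0) :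
    ∃ᶠ x in f, u x < liminf u f + δ :=
  frequently_lt_of_liminf_lt (h := ENNReal.lt_add_right hu hδ)

end ENNReal

theorem liminf_finite_weaklyflat_general (F : Filter ℝ≥0∞)
    (h : (⨆ f ∈ F, ⨅ x ∈ f, x) ≠ ∞) :
    ∀ ε : ℝ≥0∞, 0 < ε → ∃ f ∈ F, ∀ x ∈ f, ∀ g ∈ F, ∃ y ∈ g,
      y - x ≤ ε := by
  intro ε hε
  replace h : liminf id F ≠ ∞ := by rwa [liminf_eq_iSup_iInf]
  have hhalf : ε / 2 ≠ 0 := (ENNReal.half_pos hε.ne').ne'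
  refine ⟨_, ENNReal.eventually_liminf_le_add h hhalf, fun x hx g hg => ?_⟩
  obtain ⟨y, hy, hyL⟩ := frequently_iff.mp (ENNReal.frequently_lt_liminf_add h hhalf) hg
  refine ⟨y, hy, tsub_le_iff_left.mpr ?_⟩
  calc y ≤ liminf id F + ε / 2 := hyL.le
    _ ≤ x + ε / 2 + ε / 2 := by gcongr; exact hx
    _ = x + ε := by rw [add_assoc, ENNReal.add_halves]

theorem liminf_finite_weaklyflat (F : Filter ℝ≥0∞) [F.NeBot]
    (h : (⨆ f ∈ F, ⨅ x ∈ f, x) ≠ ∞) :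
    ∀ ε : ℝ≥0∞, 0 < ε → ∃ f ∈ F, ∀ x ∈ f, ∀ g ∈ F, ∃ y ∈ g,
      y - x ≤ ε :=
  liminf_finite_weaklyflat_general F h
end

section
/- Let F be a proper filter on [0,∞] with liminf(F) := ⨆_{f∈F} ⨅_{x∈f} x = ∞. Then F is weakly flat (for the distance d(x,y) = max{y−x,0}) if and only if F is the principal filter generated by {∞}. -/
open ENNReal

open Filter

theorem liminf_infty_weaklyflat_iff (F : Filter ℝ≥0∞) [F.NeBot]
    (h : (⨆ f ∈ F, ⨅ x ∈ f, x) = ∞) :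
    (∀ ε : ℝ≥0∞, 0 < ε → ∃ f ∈ F, ∀ x ∈ f, ∀ g ∈ F, ∃ y ∈ g, y - x ≤ ε) ↔
      F = Filter.principal {(∞ : ℝ≥0∞)} := by
  constructor
  · intro hw
    obtain ⟨f, hfF, hf⟩ := hw 1 one_pos
    have hfsub : f ⊆ {∞} := by
      intro x hx
      by_contra hxne
      have hx' : x ≠ ∞ := hxne
      have hlt : x + 1 < ∞ := ENNReal.add_lt_top.mpr ⟨hx'.lt_top, ENNReal.one_lt_top⟩
      rw [← h] at hlt
      obtain ⟨g, hg⟩ := lt_iSup_iff.mp hlt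
      obtain ⟨hgF, hg2⟩ := lt_iSup_iff.mp hg
      obtain ⟨y, hyg, hy⟩ := hf x hx g hgF
      have h1 : y ≤ x + 1 := by
        rw [tsub_le_iff_right] at hy
        simpa [add_comm] using hy
      have h2 : x + 1 < y := lt_of_lt_of_le hg2 (iInf₂_le y hyg)
      exact absurd h1 (not_le.mpr h2)
    have hne : f.Nonempty := F.nonempty_of_mem hfF
    have hmem : {(∞ : ℝ≥0∞)} ∈ F := F.mem_of_superset hfF hfsub
    refine le_antisymm (le_principal_iff.mpr hmem) ?_
    intro s hs
    have : (s ∩ f).Nonempty := F.nonempty_of_mem (F.inter_mem hs hfF)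
    obtain ⟨z, hzs, hzf⟩ := this
    have hz : z = ∞ := hfsub hzf
    simp only [mem_principal]
    intro w hw
    simp only [Set.mem_singleton_iff] at hw
    subst hw
    rw [← hz]; exact hzs
  · intro hF ε hε
    subst hF
    refine ⟨{∞}, mem_principal_self _, ?_⟩
    intro x hx g hg
    simp only [Set.mem_singleton_iff] at hx
    subst hx
    refine ⟨∞, ?_, by simp⟩
    exact (mem_principal.mp hg) rfl
end

section
/- For weakly flat filters F₁, F₂ on the general metric space [0,∞] (distance d(x,y) = max{y−x,0}), one has ⨅_{f∈F₁} ⨆_{x∈f} ⨆_{g∈F₂} ⨅_{y∈g} d(x,y) = d(liminf(F₁), liminf(F₂)), where liminf(F) = ⨆_{f∈F} ⨅_{x∈f} x. -/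
/-!
Write `Lᵢ` for `liminf Fᵢ`. Truncated subtraction commutes with (nonempty) infima and with suprema
in its first argument and turns infima in its second argument into suprema, so the left side
collapses to `⨅ f ∈ F₁, (L₂ - ⨅ x ∈ f, x)` and then to `L₂ - L₁`. This last step can only fail
in `ℝ≥0∞` when `L₂ = L₁ = ∞` while no `f ∈ F₁` has infimum `∞`. Weak flatness of `F₁`
rules this out: a member `f` of `F₁` lying within distance `1` of every member of `F₁` cannot
contain a finite `x`, since some member of `F₁` lies above `x + 1`.
-/

open ENNReal

open Filter

namespace ENNReal

variable {ι : Type*}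

theorem biInf_sub {s : Set ι} (hs : s.Nonempty) (f : ι → ℝ≥0∞) (a : ℝ≥0∞) :
    ⨅ i ∈ s, (f i - a) = (⨅ i ∈ s, f i) - a := by
  rw [← sInf_image, ← sInf_image, ← Set.image_image (· - a) f s]
  exact (Monotone.map_csInf_of_continuousAt (continuous_sub_right a).continuousAt
    (fun _ _ h ↦ tsub_le_tsub_right h a) (hs.image f)).symm

theorem sub_biSup {s : Set ι} (hs : s.Nonempty) {f : ι → ℝ≥0∞}
    (hf : ⨆ i ∈ s, f i = ∞ → ∃ i ∈ s, f i = ∞) (a : ℝ≥0∞) :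
    a - ⨆ i ∈ s, f i = ⨅ i ∈ s, (a - f i) := by
  refine le_antisymm (le_iInf₂ fun i hi ↦ tsub_le_tsub_left (le_biSup f hi) a) ?_
  rcases ne_or_eq a ∞ with ha | rfl
  · have := hs.to_subtype
    simp only [iSup_subtype', iInf_subtype', ENNReal.sub_iSup ha, le_rfl]
  by_cases htop : ⨆ i ∈ s, f i = ∞
  · obtain ⟨i, hi, hfi⟩ := hf htop
    calc ⨅ i ∈ s, (∞ - f i) ≤ ∞ - f i := iInf₂_le i hi
      _ = ∞ - ⨆ i ∈ s, f i := by rw [hfi, htop]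
  · rw [top_sub htop]
    exact le_top

end ENNReal

def Filter.WeaklyFlat (F : Filter ℝ≥0∞) : Prop :=
  ∀ ε : ℝ≥0∞, 0 < ε → ∃ f ∈ F, ∀ x ∈ f, ∀ g ∈ F, ∃ y ∈ g, y - x ≤ ε

theorem Filter.WeaklyFlat.singleton_top_mem {F : Filter ℝ≥0∞} (hF : F.WeaklyFlat)
    (h : ⨆ f ∈ F, ⨅ x ∈ f, x = ∞) : {∞} ∈ F := by
  obtain ⟨f, hf, hflat⟩ := hF 1 one_pos
  refine mem_of_superset hf fun x hx ↦ ?_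
  by_contra hx_top
  have : x + 1 < ⨆ g ∈ F, ⨅ y ∈ g, y := h ▸ add_lt_top.2 ⟨lt_top_iff_ne_top.2 hx_top, one_lt_top⟩
  obtain ⟨g, hg, hlt⟩ := lt_biSup_iff.1 this
  obtain ⟨y, hy, hyx⟩ := hflat x hx g hg
  exact (hlt.trans_le (iInf₂_le y hy)).not_ge (tsub_le_iff_left.1 hyx)

theorem hom_weaklyflat_ennreal_general (F₁ F₂ : Filter ℝ≥0∞) [F₂.NeBot]
    (h₁ : ∀ ε : ℝ≥0∞, 0 < ε → ∃ f ∈ F₁, ∀ x ∈ f, ∀ g ∈ F₁, ∃ y ∈ g, y - x ≤ ε) :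
    (⨅ f ∈ F₁, ⨆ x ∈ f, ⨆ g ∈ F₂, ⨅ y ∈ g, y - x) =
      (⨆ g ∈ F₂, ⨅ y ∈ g, y) - (⨆ f ∈ F₁, ⨅ x ∈ f, x) := by
  set L₂ := ⨆ g ∈ F₂, ⨅ y ∈ g, y
  calc (⨅ f ∈ F₁, ⨆ x ∈ f, ⨆ g ∈ F₂, ⨅ y ∈ g, y - x)
      = ⨅ f ∈ F₁, ⨆ x ∈ f, ⨆ g ∈ F₂, (⨅ y ∈ g, y) - x :=
        biInf_congr fun _ _ ↦ biSup_congr fun x _ ↦ biSup_congr fun _ hg ↦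
          biInf_sub (F₂.nonempty_of_mem hg) id x
    _ = ⨅ f ∈ F₁, (L₂ - ⨅ x ∈ f, x) := by simp only [L₂, ENNReal.iSup_sub, ENNReal.sub_iInf]
    _ = L₂ - ⨆ f ∈ F₁, ⨅ x ∈ f, x := by
        refine (sub_biSup (s := F₁.sets) ⟨_, univ_mem⟩ (fun h ↦ ?_) L₂).symm
        exact ⟨{∞}, WeaklyFlat.singleton_top_mem h₁ h, by simp⟩

theorem hom_weaklyflat_ennreal (F₁ F₂ : Filter ℝ≥0∞) [F₁.NeBot] [F₂.NeBot]
    (h₁ : ∀ ε : ℝ≥0∞, 0 < ε → ∃ f ∈ F₁, ∀ x ∈ f, ∀ g ∈ F₁, ∃ y ∈ g, y - x ≤ ε)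
    (h₂ : ∀ ε : ℝ≥0∞, 0 < ε → ∃ f ∈ F₂, ∀ x ∈ f, ∀ g ∈ F₂, ∃ y ∈ g, y - x ≤ ε) :
    (⨅ f ∈ F₁, ⨆ x ∈ f, ⨆ g ∈ F₂, ⨅ y ∈ g, y - x) =
      (⨆ g ∈ F₂, ⨅ y ∈ g, y) - (⨆ f ∈ F₁, ⨅ x ∈ f, x) :=
  hom_weaklyflat_ennreal_general F₁ F₂ h₁
end

section
/- Let A be a symmetric general metric space. If M : A → [0,∞] is a left module that is left adjoint (i.e. there is a right module Ñ with ⨅_x (M(x)+Ñ(x)) = 0 and d(x,y) ≤ Ñ(y) + M(x) for all x,y), then M and Ñ are equal as maps A → [0,∞]. -/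
open ENNReal

theorem symmetric_left_adjoint_eq (A : Type*) (d : A → A → ℝ≥0∞)
    (htri : ∀ x y z, d x z ≤ d x y + d y z) (hrefl : ∀ x, d x x = 0)
    (hsym : ∀ x y, d x y = d y x)
    (M N : A → ℝ≥0∞)
    (hM : ∀ x y, M x ≤ M y + d x y)
    (hN : ∀ x y, N y ≤ d x y + N x)
    (hcounit : (⨅ x, M x + N x) = 0)
    (hunit : ∀ x y, d x y ≤ N y + M x) :
    M = N := by
  have hne : Nonempty A := by
    by_contra h
    rw [not_nonempty_iff] at h
    simp [iInf_of_empty] at hcounit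
  funext x
  have h1 : ∀ z, M x ≤ N x + 2 * (M z + N z) := by
    intro z
    calc M x ≤ M z + d x z := hM x z
      _ ≤ M z + (N x + M z) := by
          gcongr
          rw [hsym]; exact hunit z x
      _ = N x + (M z + M z) := by ring
      _ ≤ N x + 2 * (M z + N z) := by
          rw [two_mul]; gcongr <;> exact le_self_add
  have h2 : ∀ z, N x ≤ M x + 2 * (M z + N z) := by
    intro z
    calc N x ≤ d z x + N z := hN z x
      _ ≤ (N z + M x) + N z := by
          gcongr
          rw [hsym]; exact hunit x z
      _ = M x + (N z + N z) := by ring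
      _ ≤ M x + 2 * (M z + N z) := by
          rw [two_mul]; gcongr <;> exact le_add_self
  have key : ∀ (a : ℝ≥0∞), (∀ z, a ≤ (M z + N z)) → True := fun _ _ => trivial
  have e1 : M x ≤ N x := by
    calc M x ≤ ⨅ z, (N x + 2 * (M z + N z)) := le_iInf h1
      _ = N x + 2 * ⨅ z, (M z + N z) := by
          rw [← ENNReal.add_iInf, ← mul_iInf (by simp)]
      _ = N x := by rw [hcounit]; simp
  have e2 : N x ≤ M x := by
    calc N x ≤ ⨅ z, (M x + 2 * (M z + N z)) := le_iInf h2
      _ = M x + 2 * ⨅ z, (M z + N z) := by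
          rw [← ENNReal.add_iInf, ← mul_iInf (by simp)]
      _ = M x := by rw [hcounit]; simp
  exact le_antisymm e1 e2
end
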